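/- Let F_1,…,F_n : ℝ^d → ℝ be G-Lipschitz and L-smooth, let θ ∈ (0,1], 1 ≤ m ≤ n, λ ≥ 0, ν > 0, τ ≥ 1, and set F̃_i(w) = F_i(w) + (λ/2)‖w‖², L' = L + λ + G²/ν. Fix w ∈ ℝ^d, and for each client i define local gradient-descent iterates w_{i,0} = w and w_{i,k+1} = w_{i,k} − γ∇F̃_i(w_{i,k}) for k = 0,…,τ−1. For each subset S of size m let π^S be the maximizer of π ↦ ∑_{i∈S} π_i F̃_i(w) − ν D_S(π) over P_{θ,S}, let F̄_θ^ν(w) = E_{S∼U_m}[max_{π∈P_{θ,S}}(∑_{i∈S} π_i F̃_i(w) − ν D_S(π))] with minimizer w̄*, and define the client drift d = E_{S∼U_m}[ ∑_{i∈S} π^S_i ∑_{k=0}^{τ−1} ‖w_{i,k} − w‖² ]. If 0 < γ ≤ 1/(4τ(L+λ)), then d ≤ 8τ²(τ−1)γ² ( (4 + 8/(θm)) G² + 2L' ( F̄_θ^ν(w) − F̄_θ^ν(w̄*) ) ). Moreover, if λ = 0 (with or without smoothing), then d ≤ 8τ²(τ−1)γ² G². -/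

import Mathlib

/-!
Along the local iterates, `‖∇F̃ᵢ(wᵢₖ) - ∇F̃ᵢ(w)‖ ≤ (L + λ) ‖wᵢₖ - w‖` and
`‖∇F̃ᵢ(w)‖ ≤ G + λ‖w‖`, so the step-size condition `γ (L + λ) τ ≤ 1/4` keeps
`‖wᵢₖ - w‖ ≤ (4/3) k γ (G + λ‖w‖)`. As every `πˢ` is a probability vector, the drift is at
most `(16/9) τ² (τ - 1) γ² (G + λ‖w‖)²`. To get rid of `‖w‖`, compare `F̄` at `w` and at `0`:
by the Lipschitz bound every objective value grows by at least `λ‖w‖²/2 - G‖w‖`, hence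
`F̄(w) - F̄(w̄*) ≥ F̄(w) - F̄(0) ≥ λ‖w‖²/2 - G‖w‖`, and this absorbs the `λ‖w‖` term.
-/

open scoped BigOperators

noncomputable section

open Finset InnerProductSpace

theorem sum_mul_le_of_forall_le {ι : Type*} {S : Finset ι} {p f : ι → ℝ} {C : ℝ}
    (hp : ∀ i ∈ S, 0 ≤ p i) (h1 : ∑ i ∈ S, p i = 1) (hf : ∀ i ∈ S, f i ≤ C) :
    ∑ i ∈ S, p i * f i ≤ C := calc
  ∑ i ∈ S, p i * f i ≤ ∑ i ∈ S, p i * C :=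
    sum_le_sum fun i hi => mul_le_mul_of_nonneg_left (hf i hi) (hp i hi)
  _ = C := by rw [← sum_mul, h1, one_mul]

section Gradient

variable {E : Type*} [NormedAddCommGroup E] [InnerProductSpace ℝ E] [CompleteSpace E]

theorem gradient_add_half_mul_norm_sq {f : E → ℝ} {v : E} (hf : DifferentiableAt ℝ f v)
    (lam : ℝ) : gradient (fun z => f z + lam / 2 * ‖z‖ ^ 2) v = gradient f v + lam • v := by
  have hdual : toDual ℝ E (gradient f v + lam • v)
      = fderiv ℝ f v + (lam / 2) • (2 • innerSL ℝ v) := by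
    ext y
    simp only [map_add, toDual_gradient, map_smul, add_apply, smul_apply, toDual_apply_apply,
      smul_eq_mul, coe_innerSL_apply, nsmul_eq_mul, Nat.cast_ofNat, add_right_inj]
    ring
  refine HasGradientAt.gradient (hasGradientAt_iff_hasFDerivAt.2 ?_)
  rw [hdual]
  exact hf.hasFDerivAt.fun_add ((hasStrictFDerivAt_norm_sq v).hasFDerivAt.const_mul (lam / 2))

theorem norm_gradient_le_of_abs_sub_le {f : E → ℝ} {G : ℝ} (hG : 0 ≤ G)
    (hf : ∀ v v', |f v - f v'| ≤ G * ‖v - v'‖) (v : E) : ‖gradient f v‖ ≤ G := by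
  rw [← (toDual ℝ E).norm_map, toDual_gradient]
  exact norm_fderiv_le_of_lip' ℝ hG (.of_forall fun x => hf x v)

theorem norm_gradient_add_half_mul_norm_sq_le {f : E → ℝ} {G lam : ℝ} (hf : Differentiable ℝ f)
    (hG : 0 ≤ G) (hflip : ∀ v v', |f v - f v'| ≤ G * ‖v - v'‖) (hlam : 0 ≤ lam) (v : E) :
    ‖gradient (fun z => f z + lam / 2 * ‖z‖ ^ 2) v‖ ≤ G + lam * ‖v‖ := by
  rw [gradient_add_half_mul_norm_sq (hf v)]
  grw [norm_add_le, norm_gradient_le_of_abs_sub_le hG hflip, norm_smul, Real.norm_of_nonneg hlam]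

theorem norm_gradient_add_half_mul_norm_sq_sub_le {f : E → ℝ} {L lam : ℝ}
    (hf : Differentiable ℝ f) (hL : ∀ v v', ‖gradient f v - gradient f v'‖ ≤ L * ‖v - v'‖)
    (hlam : 0 ≤ lam) (v v' : E) :
    ‖gradient (fun z => f z + lam / 2 * ‖z‖ ^ 2) v - gradient (fun z => f z + lam / 2 * ‖z‖ ^ 2) v'‖
      ≤ (L + lam) * ‖v - v'‖ := by
  rw [gradient_add_half_mul_norm_sq (hf v), gradient_add_half_mul_norm_sq (hf v'),
    add_sub_add_comm, ← smul_sub]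
  grw [norm_add_le, hL, norm_smul, Real.norm_of_nonneg hlam]
  exact (add_mul _ _ _).ge

end Gradient

section GradientDescent

variable {E : Type*} [SeminormedAddCommGroup E] [NormedSpace ℝ E]
  {g : E → E} {x : ℕ → E} {γ K B : ℝ} {τ : ℕ}

theorem norm_gradientDescent_sub_le (hγ : 0 ≤ γ) (hK : 0 ≤ K) (hstep : γ * K * τ ≤ 1 / 4)
    (hx : ∀ k, x (k + 1) = x k - γ • g (x k))
    (hg : ∀ y, ‖g y - g (x 0)‖ ≤ K * ‖y - x 0‖) (hB : ‖g (x 0)‖ ≤ B) :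
    ∀ k ≤ τ, ‖x k - x 0‖ ≤ 4 / 3 * k * γ * B := by
  intro k
  induction k with
  | zero => simp
  | succ k ih =>
    intro hk
    have hk' : γ * K * k ≤ 1 / 4 := by
      refine le_trans (mul_le_mul_of_nonneg_left ?_ (by positivity)) hstep
      exact_mod_cast (Nat.le_succ k).trans hk
    have hsplit : x (k + 1) - x 0 = (x k - x 0) - γ • (g (x k) - g (x 0)) - γ • g (x 0) := by
      rw [hx, smul_sub]; abel
    have hstep_norm : ‖x (k + 1) - x 0‖ ≤ (1 + γ * K) * ‖x k - x 0‖ + γ * B := by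
      rw [hsplit]
      refine (norm_sub_le _ _).trans ?_
      grw [norm_sub_le, norm_smul, norm_smul, Real.norm_of_nonneg hγ, hg, hB]
      linarith
    have hprev := ih (Nat.le_of_succ_le hk)
    have hB0 : 0 ≤ γ * B := mul_nonneg hγ ((norm_nonneg _).trans hB)
    -- `γ K k ≤ 1/4` is what keeps `(1 + γ K) (4/3) k γ B + γ B ≤ (4/3) (k + 1) γ B`.
    grw [hstep_norm, hprev]
    push_cast
    nlinarith

theorem sum_range_norm_gradientDescent_sub_sq_le (hγ : 0 ≤ γ) (hK : 0 ≤ K)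
    (hstep : γ * K * τ ≤ 1 / 4) (hx : ∀ k, x (k + 1) = x k - γ • g (x k))
    (hg : ∀ y, ‖g y - g (x 0)‖ ≤ K * ‖y - x 0‖) (hB : ‖g (x 0)‖ ≤ B) (hτ : 1 ≤ τ) :
    ∑ k ∈ range τ, ‖x k - x 0‖ ^ 2 ≤ 16 / 9 * τ ^ 2 * (τ - 1) * γ ^ 2 * B ^ 2 := by
  have hγB : 0 ≤ γ * B := mul_nonneg hγ ((norm_nonneg _).trans hB)
  have hτ' : (1 : ℝ) ≤ τ := by exact_mod_cast hτ
  have hterm : ∀ k ∈ range τ, ‖x k - x 0‖ ^ 2 ≤ (4 / 3 * (τ - 1) * γ * B) ^ 2 := by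
    intro k hk
    have hk : k + 1 ≤ τ := mem_range.1 hk
    have hk' : (k : ℝ) ≤ τ - 1 := by
      rw [le_sub_iff_add_le]; exact_mod_cast hk
    gcongr
    refine (norm_gradientDescent_sub_le hγ hK hstep hx hg hB k (by omega)).trans ?_
    nlinarith
  calc ∑ k ∈ range τ, ‖x k - x 0‖ ^ 2 ≤ τ * (4 / 3 * (τ - 1) * γ * B) ^ 2 := by
        simpa using sum_le_sum hterm
    _ ≤ 16 / 9 * τ ^ 2 * (τ - 1) * γ ^ 2 * B ^ 2 := by
        have : 0 ≤ τ * (τ - 1) * (γ * B) ^ 2 := by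
          have : (0 : ℝ) ≤ τ - 1 := by linarith
          positivity
        nlinarith

end GradientDescent

section RegularizedDescent

variable {E : Type*} [NormedAddCommGroup E] [InnerProductSpace ℝ E] [CompleteSpace E]

theorem sum_range_norm_sub_sq_le_of_regularized_descent {f : E → ℝ} {G L lam γ : ℝ} {τ : ℕ}
    {x : ℕ → E} (hf : Differentiable ℝ f) (hG : 0 ≤ G)
    (hflip : ∀ v v', |f v - f v'| ≤ G * ‖v - v'‖) (hL : 0 ≤ L)
    (hsmooth : ∀ v v', ‖gradient f v - gradient f v'‖ ≤ L * ‖v - v'‖) (hlam : 0 ≤ lam)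
    (hγpos : 0 < γ) (hγ : γ ≤ 1 / (4 * τ * (L + lam))) (hτ : 1 ≤ τ)
    (hx : ∀ k, x (k + 1) = x k - γ • gradient (fun z => f z + lam / 2 * ‖z‖ ^ 2) (x k)) :
    ∑ k ∈ range τ, ‖x k - x 0‖ ^ 2
      ≤ 16 / 9 * τ ^ 2 * (τ - 1) * γ ^ 2 * (G + lam * ‖x 0‖) ^ 2 := by
  have hstep : γ * (L + lam) * τ ≤ 1 / 4 := by
    have hpos : 0 < 4 * τ * (L + lam) := by
      by_contra h
      linarith [one_div_nonpos.2 (not_lt.1 h)]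
    linarith [(le_div_iff₀ hpos).1 hγ]
  exact sum_range_norm_gradientDescent_sub_sq_le hγpos.le (add_nonneg hL hlam) hstep hx
    (fun y => norm_gradient_add_half_mul_norm_sq_sub_le hf hsmooth hlam y _)
    (norm_gradient_add_half_mul_norm_sq_le hf hG hflip hlam _) hτ

end RegularizedDescent

section SmoothedMax

variable {ι : Type*}

theorem sum_mul_log_mul_card_nonneg {S : Finset ι} {π : ι → ℝ} (h0 : ∀ i, 0 ≤ π i)
    (h1 : ∑ i ∈ S, π i = 1) : 0 ≤ ∑ i ∈ S, π i * Real.log (π i * #S) := by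
  have hS : (0 : ℝ) < #S := by
    exact_mod_cast card_pos.2 (nonempty_of_sum_ne_zero (h1 ▸ one_ne_zero))
  have hgibbs : ∑ i ∈ S, (π i * #S - 1) ≤ #S * ∑ i ∈ S, π i * Real.log (π i * #S) := by
    rw [mul_sum]
    refine sum_le_sum fun i _ => ?_
    have := Real.self_sub_one_le_mul_log (mul_nonneg (h0 i) hS.le)
    linarith
  rw [sum_sub_distrib, ← sum_mul, h1, sum_const, nsmul_one, one_mul, sub_self] at hgibbs
  exact nonneg_of_mul_nonneg_right hgibbs hS

/-- The values `∑ᵢ πᵢ cᵢ - ν D_S(π)` for `π ∈ P_{θ,S}`, with `π` extended by zero outside `S`. -/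
def smoothedValues (θ ν : ℝ) (m : ℕ) (S : Finset ι) (c : ι → ℝ) : Set ℝ :=
  {x : ℝ | ∃ π : ι → ℝ, (∀ i, 0 ≤ π i) ∧ (∀ i ∉ S, π i = 0) ∧
    (∑ i ∈ S, π i = 1) ∧ (∀ i, π i ≤ 1 / (θ * m)) ∧
    x = (∑ i ∈ S, π i * c i) - ν * ∑ i ∈ S, π i * Real.log (π i * m)}

def smoothedMax (θ ν : ℝ) (m : ℕ) (S : Finset ι) (c : ι → ℝ) : ℝ :=
  sSup (smoothedValues θ ν m S c)

variable {θ ν : ℝ} {S : Finset ι}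

theorem smoothedValues_nonempty [DecidableEq ι] (hθ : θ ∈ Set.Ioc 0 1) (hS : S.Nonempty)
    (c : ι → ℝ) : (smoothedValues θ ν #S S c).Nonempty := by
  have hS' : (0 : ℝ) < #S := by exact_mod_cast hS.card_pos
  have hcap : 1 / (#S : ℝ) ≤ 1 / (θ * #S) :=
    one_div_le_one_div_of_le (by nlinarith [hθ.1]) (by nlinarith [hθ.2])
  refine ⟨_, fun i => if i ∈ S then 1 / #S else 0, fun i => ?_, fun i hi => if_neg hi, ?_,
    fun i => ?_, rfl⟩
  · dsimp only; split_ifs <;> positivity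
  · rw [sum_ite_mem, inter_self, sum_const, nsmul_eq_mul, mul_one_div_cancel hS'.ne']
  · dsimp only; split_ifs
    · exact hcap
    · exact (by positivity : (0 : ℝ) ≤ 1 / #S).trans hcap

theorem bddAbove_smoothedValues (hν : 0 ≤ ν) (c : ι → ℝ) :
    BddAbove (smoothedValues θ ν #S S c) := by
  refine ⟨∑ i ∈ S, |c i|, ?_⟩
  rintro _ ⟨π, h0, -, h1, -, rfl⟩
  have hent := mul_nonneg hν (sum_mul_log_mul_card_nonneg h0 h1)
  have hlin : ∑ i ∈ S, π i * c i ≤ ∑ i ∈ S, |c i| :=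
    sum_mul_le_of_forall_le (fun i _ => h0 i) h1 fun i hi =>
      (le_abs_self _).trans (single_le_sum (fun j _ => abs_nonneg (c j)) hi)
  linarith

theorem smoothedMax_add_le [DecidableEq ι] (hθ : θ ∈ Set.Ioc 0 1) (hν : 0 ≤ ν) (hS : S.Nonempty)
    {c c' : ι → ℝ} {a : ℝ} (hcc' : ∀ i ∈ S, c i + a ≤ c' i) :
    smoothedMax θ ν #S S c + a ≤ smoothedMax θ ν #S S c' := by
  rw [← le_sub_iff_add_le]
  refine csSup_le (smoothedValues_nonempty hθ hS c) ?_
  rintro _ ⟨π, h0, hout, h1, hcap, rfl⟩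
  rw [le_sub_iff_add_le]
  refine le_trans ?_ (le_csSup (bddAbove_smoothedValues hν c') ⟨π, h0, hout, h1, hcap, rfl⟩)
  have : ∑ i ∈ S, π i * c i + a ≤ ∑ i ∈ S, π i * c' i := calc
    ∑ i ∈ S, π i * c i + a = ∑ i ∈ S, π i * (c i + a) := by
      simp only [mul_add, sum_add_distrib, ← sum_mul, h1, one_mul]
    _ ≤ ∑ i ∈ S, π i * c' i := sum_le_sum fun i hi => mul_le_mul_of_nonneg_left (hcc' i hi) (h0 i)
  linarith

end SmoothedMax

section SmoothedRisk

theorem sum_filter_card_eq_div_choose {n m : ℕ} (f : Finset (Fin n) → ℝ) :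
    (∑ S ∈ univ.filter (fun S : Finset (Fin n) => #S = m), f S) / (n.choose m : ℝ)
      = 𝔼 S ∈ powersetCard m univ, f S := by
  rw [expect_eq_sum_div_card, card_powersetCard, card_univ, Fintype.card_fin,
    powersetCard_eq_filter, powerset_univ]

variable {α : Type*} [Fintype α] {m : ℕ}

variable {E : Type*} [SeminormedAddCommGroup E]

/-- The paper's `F̄_θ^ν`, with `F̃ᵢ = F i + lam / 2 * ‖·‖²`. -/
def smoothedRisk (θ ν lam : ℝ) (m : ℕ) (F : α → E → ℝ) (v : E) : ℝ :=
  𝔼 S ∈ powersetCard m univ, smoothedMax θ ν m S (fun i => F i v + lam / 2 * ‖v‖ ^ 2)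

theorem smoothedRisk_zero_add_le [DecidableEq α] {θ ν lam G : ℝ} {F : α → E → ℝ}
    (hθ : θ ∈ Set.Ioc 0 1) (hν : 0 ≤ ν) (hm : 0 < m) (hmα : m ≤ Fintype.card α)
    (hF : ∀ i v v', |F i v - F i v'| ≤ G * ‖v - v'‖) (w : E) :
    smoothedRisk θ ν lam m F 0 + (lam / 2 * ‖w‖ ^ 2 - G * ‖w‖) ≤ smoothedRisk θ ν lam m F w := by
  have hsubsets : (powersetCard m (univ : Finset α)).Nonempty := powersetCard_nonempty.2 hmα
  unfold smoothedRisk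
  rw [← expect_const hsubsets (lam / 2 * ‖w‖ ^ 2 - G * ‖w‖), ← expect_add_distrib]
  refine expect_le_expect fun S hS => ?_
  obtain rfl := (mem_powersetCard.1 hS).2
  refine smoothedMax_add_le hθ hν (card_pos.1 hm) fun i _ => ?_
  have := (abs_le.1 (hF i w 0)).1
  simp only [sub_zero, norm_zero] at this ⊢
  linarith

end SmoothedRisk

/-- As `lam * Δ ≥ a ^ 2 / 2 - G * a` for `a = lam * r`, this reduces to the positive definiteness of
`17 G² - 11 G a + 7 a² / 2`. -/
theorem sq_add_mul_le_of_sub_le {G lam r L' Δ : ℝ} (hlam : 0 ≤ lam) (hL' : lam ≤ L')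
    (hΔ0 : 0 ≤ Δ) (hΔ : lam / 2 * r ^ 2 - G * r ≤ Δ) :
    (G + lam * r) ^ 2 ≤ 18 * G ^ 2 + 9 * L' * Δ := by
  have hlamΔ : lam * (lam / 2 * r ^ 2 - G * r) ≤ L' * Δ :=
    (mul_le_mul_of_nonneg_left hΔ hlam).trans (mul_le_mul_of_nonneg_right hL' hΔ0)
  nlinarith [sq_nonneg (11 * G - 7 * (lam * r))]

theorem client_drift_bound_general
    (d n m τ : ℕ) (hm : 0 < m) (hmn : m ≤ n) (hτ : 1 ≤ τ)
    (θ lam ν G L γ : ℝ) (hθ : θ ∈ Set.Ioc (0:ℝ) 1) (hlam : 0 ≤ lam) (hν : 0 < ν)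
    (hG : 0 ≤ G) (hL : 0 ≤ L)
    (hγpos : 0 < γ) (hγ : γ ≤ 1 / (4 * τ * (L + lam)))
    (F : Fin n → EuclideanSpace ℝ (Fin d) → ℝ)
    (hFlip : ∀ i v v', |F i v - F i v'| ≤ G * ‖v - v'‖)
    (hFc1 : ∀ i, ContDiff ℝ 1 (F i))
    (hFgrad : ∀ i v v', ‖gradient (F i) v - gradient (F i) v'‖ ≤ L * ‖v - v'‖)
    (w wbarstar : EuclideanSpace ℝ (Fin d))
    (u : Fin n → ℕ → EuclideanSpace ℝ (Fin d))
    (hu0 : ∀ i, u i 0 = w)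
    (hurec : ∀ i k, u i (k + 1)
      = u i k - γ • gradient (fun z => F i z + lam / 2 * ‖z‖ ^ 2) (u i k))
    (sel : Finset (Fin n) → Fin n → ℝ)
    (hsel : ∀ S : Finset (Fin n), S.card = m →
      (∀ i, 0 ≤ sel S i) ∧ (∀ i ∉ S, sel S i = 0) ∧ (∑ i ∈ S, sel S i = 1) ∧
      (∀ i, sel S i ≤ 1 / (θ * m)) ∧
      ∀ π : Fin n → ℝ, (∀ i, 0 ≤ π i) → (∀ i ∉ S, π i = 0) → (∑ i ∈ S, π i = 1) →
        (∀ i, π i ≤ 1 / (θ * m)) →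
        (∑ i ∈ S, π i * (F i w + lam / 2 * ‖w‖ ^ 2))
            - ν * ∑ i ∈ S, π i * Real.log (π i * m)
          ≤ (∑ i ∈ S, sel S i * (F i w + lam / 2 * ‖w‖ ^ 2))
            - ν * ∑ i ∈ S, sel S i * Real.log (sel S i * m)) :
    ∀ Fbar : EuclideanSpace ℝ (Fin d) → ℝ,
      Fbar = (fun v =>
        (∑ S ∈ Finset.univ.filter (fun S : Finset (Fin n) => S.card = m),
          sSup {x : ℝ | ∃ π : Fin n → ℝ, (∀ i, 0 ≤ π i) ∧ (∀ i ∉ S, π i = 0) ∧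
            (∑ i ∈ S, π i = 1) ∧ (∀ i, π i ≤ 1 / (θ * m)) ∧
            x = (∑ i ∈ S, π i * (F i v + lam / 2 * ‖v‖ ^ 2))
              - ν * ∑ i ∈ S, π i * Real.log (π i * m)}) / (n.choose m : ℝ)) →
    (∀ v, Fbar wbarstar ≤ Fbar v) →
    ∀ drift : ℝ,
      drift = (∑ S ∈ Finset.univ.filter (fun S : Finset (Fin n) => S.card = m),
          ∑ i ∈ S, sel S i * ∑ k ∈ Finset.range τ, ‖u i k - w‖ ^ 2) / (n.choose m : ℝ) →
      drift ≤ 8 * (τ : ℝ) ^ 2 * ((τ : ℝ) - 1) * γ ^ 2 *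
          ((4 + 8 / (θ * m)) * G ^ 2
            + 2 * (L + lam + G ^ 2 / ν) * (Fbar w - Fbar wbarstar)) ∧
      (lam = 0 → drift ≤ 8 * (τ : ℝ) ^ 2 * ((τ : ℝ) - 1) * γ ^ 2 * G ^ 2) := by
  intro Fbar hFbar hmin drift hdrift
  have hrisk : Fbar = smoothedRisk θ ν lam m F :=
    hFbar.trans (funext fun v => sum_filter_card_eq_div_choose _)
  have hdrift_le : drift ≤ 16 / 9 * τ ^ 2 * (τ - 1) * γ ^ 2 * (G + lam * ‖w‖) ^ 2 := by
    rw [hdrift, sum_filter_card_eq_div_choose]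
    refine expect_le (powersetCard_nonempty.2 (by simpa using hmn)) fun S hS => ?_
    obtain ⟨h0, -, h1, -⟩ := hsel S (mem_powersetCard.1 hS).2
    refine sum_mul_le_of_forall_le (fun i _ => h0 i) h1 fun i _ => ?_
    simpa only [hu0] using sum_range_norm_sub_sq_le_of_regularized_descent
      ((hFc1 i).differentiable one_ne_zero) hG (hFlip i) hL (hFgrad i) hlam hγpos hγ hτ (hurec i)
  have hgap : lam / 2 * ‖w‖ ^ 2 - G * ‖w‖ ≤ Fbar w - Fbar wbarstar := by
    have hmin0 := hmin 0
    rw [hrisk] at hmin0 ⊢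
    linarith [smoothedRisk_zero_add_le (lam := lam) hθ hν.le hm (by simpa using hmn) hFlip w]
  have hK : (0 : ℝ) ≤ τ ^ 2 * (τ - 1) * γ ^ 2 := by
    have : (1 : ℝ) ≤ τ := by exact_mod_cast hτ
    have : (0 : ℝ) ≤ τ - 1 := by linarith
    positivity
  refine ⟨hdrift_le.trans ?_, fun hlam0 => hdrift_le.trans ?_⟩
  · have hL' : lam ≤ L + lam + G ^ 2 / ν := le_add_of_le_of_nonneg (by linarith) (by positivity)
    have hθm : 0 ≤ 8 / (θ * m) * G ^ 2 := by
      have := hθ.1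
      positivity
    have := sq_add_mul_le_of_sub_le hlam hL' (sub_nonneg.2 (hmin w)) hgap
    nlinarith [mul_le_mul_of_nonneg_left this hK, mul_nonneg hK hθm]
  · subst hlam0
    nlinarith

/-- Client-drift bound: with local gradient-descent iterates
`w_{i,0} = w`, `w_{i,k+1} = w_{i,k} − γ ∇F̃_i(w_{i,k})` (`F̃_i = F_i + (λ/2)‖·‖²`), weights
`sel S` maximizing the smoothed partial objective over `P_{θ,S}`, and the drift
`d = E_{S ∼ U_m}[ ∑_{i∈S} sel S i ∑_{k<τ} ‖w_{i,k} − w‖² ]`, if `0 < γ ≤ 1/(4τ(L+λ))`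
then `d ≤ 8τ²(τ−1)γ² ((4 + 8/(θm)) G² + 2L'(F̄_θ^ν(w) − F̄_θ^ν(w̄*)))` with
`L' = L + λ + G²/ν`; moreover if `λ = 0` then `d ≤ 8τ²(τ−1)γ² G²`. -/
theorem client_drift_bound
    (d n m τ : ℕ) (hn : 0 < n) (hm : 0 < m) (hmn : m ≤ n) (hτ : 1 ≤ τ)
    (θ lam ν G L γ : ℝ) (hθ : θ ∈ Set.Ioc (0:ℝ) 1) (hlam : 0 ≤ lam) (hν : 0 < ν)
    (hG : 0 ≤ G) (hL : 0 ≤ L)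
    (hγpos : 0 < γ) (hγ : γ ≤ 1 / (4 * τ * (L + lam)))
    (F : Fin n → EuclideanSpace ℝ (Fin d) → ℝ)
    (hFlip : ∀ i v v', |F i v - F i v'| ≤ G * ‖v - v'‖)
    (hFc1 : ∀ i, ContDiff ℝ 1 (F i))
    (hFgrad : ∀ i v v', ‖gradient (F i) v - gradient (F i) v'‖ ≤ L * ‖v - v'‖)
    (w wbarstar : EuclideanSpace ℝ (Fin d))
    (u : Fin n → ℕ → EuclideanSpace ℝ (Fin d))
    (hu0 : ∀ i, u i 0 = w)
    (hurec : ∀ i k, u i (k + 1)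
      = u i k - γ • gradient (fun z => F i z + lam / 2 * ‖z‖ ^ 2) (u i k))
    (sel : Finset (Fin n) → Fin n → ℝ)
    (hsel : ∀ S : Finset (Fin n), S.card = m →
      (∀ i, 0 ≤ sel S i) ∧ (∀ i ∉ S, sel S i = 0) ∧ (∑ i ∈ S, sel S i = 1) ∧
      (∀ i, sel S i ≤ 1 / (θ * m)) ∧
      ∀ π : Fin n → ℝ, (∀ i, 0 ≤ π i) → (∀ i ∉ S, π i = 0) → (∑ i ∈ S, π i = 1) →
        (∀ i, π i ≤ 1 / (θ * m)) →
        (∑ i ∈ S, π i * (F i w + lam / 2 * ‖w‖ ^ 2))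
            - ν * ∑ i ∈ S, π i * Real.log (π i * m)
          ≤ (∑ i ∈ S, sel S i * (F i w + lam / 2 * ‖w‖ ^ 2))
            - ν * ∑ i ∈ S, sel S i * Real.log (sel S i * m)) :
    ∀ Fbar : EuclideanSpace ℝ (Fin d) → ℝ,
      Fbar = (fun v =>
        (∑ S ∈ Finset.univ.filter (fun S : Finset (Fin n) => S.card = m),
          sSup {x : ℝ | ∃ π : Fin n → ℝ, (∀ i, 0 ≤ π i) ∧ (∀ i ∉ S, π i = 0) ∧
            (∑ i ∈ S, π i = 1) ∧ (∀ i, π i ≤ 1 / (θ * m)) ∧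
            x = (∑ i ∈ S, π i * (F i v + lam / 2 * ‖v‖ ^ 2))
              - ν * ∑ i ∈ S, π i * Real.log (π i * m)}) / (n.choose m : ℝ)) →
    (∀ v, Fbar wbarstar ≤ Fbar v) →
    ∀ drift : ℝ,
      drift = (∑ S ∈ Finset.univ.filter (fun S : Finset (Fin n) => S.card = m),
          ∑ i ∈ S, sel S i * ∑ k ∈ Finset.range τ, ‖u i k - w‖ ^ 2) / (n.choose m : ℝ) →
      drift ≤ 8 * (τ : ℝ) ^ 2 * ((τ : ℝ) - 1) * γ ^ 2 *
          ((4 + 8 / (θ * m)) * G ^ 2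
            + 2 * (L + lam + G ^ 2 / ν) * (Fbar w - Fbar wbarstar)) ∧
      (lam = 0 → drift ≤ 8 * (τ : ℝ) ^ 2 * ((τ : ℝ) - 1) * γ ^ 2 * G ^ 2) :=
  client_drift_bound_general d n m τ hm hmn hτ θ lam ν G L γ hθ hlam hν hG hL hγpos hγ F hFlip hFc1
    hFgrad w wbarstar u hu0 hurec sel hsel
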